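/- arXiv:2108.00840 — 10 statements merged into one kernel-verified Lean document; each statement's English description precedes it below -/
import Mathlib

section
/- For every natural number m ≥ 2, the series Σ_{j=1}^{∞} 1/(F_j z + F_{j-1})^m converges absolutely for every complex number z that is not equal to -F_{n-1}/F_n for any n ≥ 1 and is not equal to -1/φ, where φ = (1+√5)/2. -/
/-!
By Binet's formula, `F_{j+1} z + F_j = A φ^j + B ψ^j` with `A = (φ z + 1)/√5`, which is nonzero
exactly when `z ≠ -1/φ`. As `|ψ| < φ`, the terms then grow like `φ^j`, so the reciprocals of
their `m`-th powers are eventually dominated by the geometric series `Σ φ^{-j}`.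
-/

open Filter Asymptotics Real

theorem isBigO_pow_add_pow {𝕜 : Type*} [NormedField 𝕜] {α β A B : 𝕜} (hA : A ≠ 0)
    (hβα : ‖β‖ < ‖α‖) :
    (fun n : ℕ => α ^ n) =O[atTop] fun n => A * α ^ n + B * β ^ n := by
  have hβ : (fun n : ℕ => β ^ n) =o[atTop] fun n => α ^ n := by
    rw [← isLittleO_norm_norm]
    simpa only [norm_pow] using isLittleO_pow_pow_of_lt_left (norm_nonneg β) hβα
  have hB : (fun n : ℕ => B * β ^ n) =o[atTop] fun n => A * α ^ n :=
    (hβ.const_mul_left B).const_mul_right hA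
  exact (isBigO_self_const_mul hA _ _).trans hB.right_isBigO_add'

theorem summable_inv_norm_pow_of_isBigO {𝕜 : Type*} [NormedDivisionRing 𝕜] {u : ℕ → 𝕜} {α : 𝕜}
    (hα : 1 < ‖α‖) (hu : (fun n => α ^ n) =O[atTop] u) {m : ℕ} (hm : m ≠ 0) :
    Summable fun n => ‖u n ^ m‖⁻¹ := by
  have hα₀ : 0 < ‖α‖⁻¹ := by positivity
  have hα₁ : ‖α‖⁻¹ < 1 := inv_lt_one_of_one_lt₀ hα
  have hinv : (fun n => ‖u n‖⁻¹) =O[atTop] fun n => ‖α‖⁻¹ ^ n := by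
    have h₀ : ∀ᶠ n in atTop, ‖α ^ n‖ = 0 → ‖u n‖ = 0 :=
      Eventually.of_forall fun n h => absurd h (by rw [norm_pow]; exact pow_ne_zero n (by linarith))
    simpa only [norm_pow, inv_pow] using hu.norm_norm.inv_rev h₀
  have hsum : Summable fun n => ‖u n‖⁻¹ :=
    summable_of_isBigO_nat (summable_geometric_of_lt_one hα₀.le hα₁) hinv
  have hsmall : ∀ᶠ n in atTop, ‖u n‖⁻¹ ≤ 1 :=
    (hinv.trans_tendsto (tendsto_pow_atTop_nhds_zero_of_lt_one hα₀.le hα₁)).eventually_le_const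
      zero_lt_one
  refine hsum.of_norm_bounded_eventually_nat ?_
  filter_upwards [hsmall] with n hn
  rw [norm_inv, norm_norm, norm_pow, ← inv_pow]
  exact pow_le_of_le_one (by positivity) hn hm

theorem fib_succ_mul_add_fib_eq (z : ℂ) (n : ℕ) :
    (Nat.fib (n + 1) : ℂ) * z + Nat.fib n =
      (goldenRatio * z + 1) / √5 * (goldenRatio : ℂ) ^ n
        + -(goldenConj * z + 1) / √5 * (goldenConj : ℂ) ^ n := by
  have h5 : ((√5 : ℝ) : ℂ) ≠ 0 := Complex.ofReal_ne_zero.2 (Real.sqrt_ne_zero'.2 (by norm_num))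
  have hfib (k : ℕ) : (Nat.fib k : ℂ) = ((goldenRatio : ℂ) ^ k - (goldenConj : ℂ) ^ k) / √5 := by
    rw [← Complex.ofReal_natCast, coe_fib_eq]
    push_cast
    rfl
  rw [hfib, hfib]
  field_simp
  ring

theorem fib_eisenstein_summable_general (m : ℕ) (hm : 2 ≤ m) (z : ℂ)
    (hz2 : z ≠ -1 / (((1 + Real.sqrt 5) / 2 : ℝ) : ℂ)) :
    Summable fun j : ℕ => ‖((Nat.fib (j + 1) : ℂ) * z + (Nat.fib j : ℂ)) ^ m‖⁻¹ := by
  have hA : (goldenRatio * z + 1 : ℂ) / √5 ≠ 0 := by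
    refine div_ne_zero ?_ (Complex.ofReal_ne_zero.2 (Real.sqrt_ne_zero'.2 (by norm_num)))
    contrapose! hz2
    have hφ : (goldenRatio : ℂ) ≠ 0 := Complex.ofReal_ne_zero.2 goldenRatio_ne_zero
    field_simp
    linear_combination hz2
  have hφ : ‖(goldenRatio : ℂ)‖ = goldenRatio := by
    rw [Complex.norm_real, Real.norm_eq_abs, abs_of_pos goldenRatio_pos]
  have hψφ : ‖(goldenConj : ℂ)‖ < ‖(goldenRatio : ℂ)‖ := by
    rw [hφ, Complex.norm_real, Real.norm_eq_abs, abs_lt]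
    constructor <;> linarith [one_lt_goldenRatio, neg_one_lt_goldenConj, goldenConj_neg]
  simp_rw [fib_succ_mul_add_fib_eq]
  exact summable_inv_norm_pow_of_isBigO (by rw [hφ]; exact one_lt_goldenRatio)
    (isBigO_pow_add_pow hA hψφ) (by omega)

/-- For `m ≥ 2`, the series `Σ_{j ≥ 1} (F_j z + F_{j-1})^{-m}` converges absolutely for every
complex `z` not equal to `-F_{n-1}/F_n` for any `n ≥ 1` and not equal to `-1/φ`. -/
theorem fib_eisenstein_summable (m : ℕ) (hm : 2 ≤ m) (z : ℂ)
    (hz1 : ∀ n : ℕ, 1 ≤ n → z ≠ -((Nat.fib (n - 1) : ℂ) / (Nat.fib n : ℂ)))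
    (hz2 : z ≠ -1 / (((1 + Real.sqrt 5) / 2 : ℝ) : ℂ)) :
    Summable fun j : ℕ => ‖((Nat.fib (j + 1) : ℂ) * z + (Nat.fib j : ℂ)) ^ m‖⁻¹ :=
  fib_eisenstein_summable_general m hm z hz2
end

section
/- Let m ≥ 2 and let z be a complex number avoiding all poles of both series (i.e., z ≠ F_n/F_{n-1} for all integers n with F_{n-1} ≠ 0, z ≠ 0, z ≠ φ, z ≠ -1/φ). Then the positively-indexed Fibonacci Eisenstein sum satisfies 𝓕_m^+(z+1) = z^{-m} 𝓕_m^+(1/z) - z^{-m}·(F_1·(1/z) + F_0)^{-m}, i.e., Σ_{n≥1} (F_n(z+1) + F_{n-1})^{-m} = z^{-m} Σ_{n≥2} (F_n(1/z) + F_{n-1})^{-m}. -/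
/-- For `m ≥ 2` and `z` avoiding all poles, the positively-indexed Fibonacci Eisenstein sum
satisfies `𝓕_m^+(z+1) = z^{-m} Σ_{n ≥ 2} (F_n (1/z) + F_{n-1})^{-m}`. -/
theorem fib_eisenstein_plus_shift (F : ℤ → ℤ) (h0 : F 0 = 0) (h1 : F 1 = 1)
    (hrec : ∀ n : ℤ, F n = F (n - 1) + F (n - 2))
    (m : ℕ) (hm : 2 ≤ m) (z : ℂ) (hz0 : z ≠ 0)
    (hpole : ∀ n : ℤ, F (n - 1) ≠ 0 → z ≠ (F n : ℂ) / (F (n - 1) : ℂ))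
    (hphi : z ≠ (((1 + Real.sqrt 5) / 2 : ℝ) : ℂ))
    (hphi' : z ≠ -1 / (((1 + Real.sqrt 5) / 2 : ℝ) : ℂ)) :
    ∑' n : ℕ, (((F ((n : ℤ) + 1) : ℂ) * (z + 1) + (F (n : ℤ) : ℂ)) ^ m)⁻¹ =
      (z ^ m)⁻¹ * ∑' n : ℕ, (((F ((n : ℤ) + 2) : ℂ) * z⁻¹ + (F ((n : ℤ) + 1) : ℂ)) ^ m)⁻¹ := by
  rw [← tsum_mul_left]
  refine tsum_congr fun n => ?_
  have hF : F ((n : ℤ) + 2) = F ((n : ℤ) + 1) + F (n : ℤ) := by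
    have := hrec ((n : ℤ) + 2)
    rw [show ((n : ℤ) + 2 - 1) = (n : ℤ) + 1 by ring,
      show ((n : ℤ) + 2 - 2) = (n : ℤ) by ring] at this
    exact this
  have key : ((F ((n : ℤ) + 1) : ℂ) * (z + 1) + (F (n : ℤ) : ℂ)) =
      z * ((F ((n : ℤ) + 2) : ℂ) * z⁻¹ + (F ((n : ℤ) + 1) : ℂ)) := by
    rw [hF]
    push_cast
    field_simp
    ring
  rw [key, mul_pow, mul_inv]
end

section
/- Let k ≥ 1 and let z be a complex number with z ≠ 0 and z not of the form F_n/F_{n-1} for any integer n (with the Fibonacci sequence extended to negative indices by F_{-n} = (-1)^{n-1} F_n), and z ≠ φ, z ≠ -1/φ. Then the bilateral series 𝓕_{2k}(z) := Σ_{j∈ℤ} (F_j z + F_{j-1})^{-2k} satisfies 𝓕_{2k}(-1/z) = z^{2k} 𝓕_{2k}(z). -/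
/-- For `k ≥ 1` and `z` avoiding `0`, all ratios `F_n/F_{n-1}`, `φ` and `-1/φ`, the bilateral
Fibonacci Eisenstein series satisfies `𝓕_{2k}(-1/z) = z^{2k} 𝓕_{2k}(z)`. -/
theorem fib_eisenstein_inversion (F : ℤ → ℤ) (h0 : F 0 = 0) (h1 : F 1 = 1)
    (hrec : ∀ n : ℤ, F n = F (n - 1) + F (n - 2))
    (k : ℕ) (hk : 1 ≤ k) (z : ℂ) (hz0 : z ≠ 0)
    (hpole : ∀ n : ℤ, z ≠ (F n : ℂ) / (F (n - 1) : ℂ))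
    (hphi : z ≠ (((1 + Real.sqrt 5) / 2 : ℝ) : ℂ))
    (hphi' : z ≠ -1 / (((1 + Real.sqrt 5) / 2 : ℝ) : ℂ)) :
    ∑' j : ℤ, (((F j : ℂ) * (-1 / z) + (F (j - 1) : ℂ)) ^ (2 * k))⁻¹ =
      z ^ (2 * k) * ∑' j : ℤ, (((F j : ℂ) * z + (F (j - 1) : ℂ)) ^ (2 * k))⁻¹ := by
  have hsq : ∀ m : ℤ, (m.negOnePow : ℤ) * (m.negOnePow : ℤ) = 1 := by
    intro m
    rcases Int.isUnit_iff.mp (Units.isUnit m.negOnePow) with h | h <;> rw [h] <;> ring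
  have hsuc : ∀ m : ℤ, ((m + 1).negOnePow : ℤ) = -(m.negOnePow : ℤ) := by
    intro m; rw [Int.negOnePow_succ]; rfl
  -- the Fibonacci negation identity, first over ℕ
  have keyN : ∀ n : ℕ, F (-(n : ℤ)) = (((n : ℤ) + 1).negOnePow : ℤ) * F (n : ℤ) := by
    intro n
    induction n using Nat.twoStepInduction with
    | zero => simp [h0]
    | one =>
      have := hrec 1
      simp only [show (1:ℤ) - 1 = 0 from rfl, show (1:ℤ) - 2 = -1 from rfl, h0, h1] at this
      push_cast
      rw [show Int.negOnePow 2 = 1 from Int.negOnePow_even 2 (by decide)]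
      simp [h1]; omega
    | more n ih1 ih2 =>
      have e1 : F (-(n:ℤ) - 2) = F (-(n:ℤ)) - F (-(n:ℤ) - 1) := by
        have := hrec (-(n:ℤ)); omega
      have e2 : F ((n:ℤ) + 2) = F ((n:ℤ) + 1) + F (n:ℤ) := by
        have h := hrec ((n:ℤ) + 2)
        rw [show (n:ℤ) + 2 - 1 = (n:ℤ) + 1 by ring, show (n:ℤ) + 2 - 2 = (n:ℤ) by ring] at h
        omega
      have hcast : (-(↑(n+2)) : ℤ) = -(n:ℤ) - 2 := by push_cast; ring
      have hcast2 : ((↑(n+2) : ℤ)) = (n:ℤ) + 2 := by push_cast; ring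
      have hcast3 : ((↑(n+1) : ℤ)) = (n:ℤ) + 1 := by push_cast; ring
      have hcast4 : (-(↑(n+1)) : ℤ) = -(n:ℤ) - 1 := by push_cast; ring
      rw [hcast, hcast2, e1, e2]
      rw [hcast4, hcast3] at ih2
      rw [show ((n:ℤ) + 2 + 1).negOnePow = ((n:ℤ)+1+1+1).negOnePow by ring_nf,
        hsuc, hsuc, hsuc] at *
      rw [ih1, ih2]; ring
  -- extend to ℤ
  have key : ∀ n : ℤ, F (-n) = ((n + 1).negOnePow : ℤ) * F n := by
    intro n
    rcases le_or_gt 0 n with hn | hn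
    · lift n to ℕ using hn
      exact keyN n
    · obtain ⟨m, rfl⟩ : ∃ m : ℕ, n = -((m:ℤ)) := ⟨n.natAbs, by omega⟩
      have := keyN m
      rw [neg_neg, this]
      have hs : ((-(m:ℤ) + 1).negOnePow : ℤ) = (((m:ℤ)+1).negOnePow : ℤ) := by
        rw [show -(m:ℤ) + 1 = -((m:ℤ) - 1) by ring, Int.negOnePow_neg,
          show (m:ℤ) + 1 = ((m:ℤ) - 1) + 1 + 1 by ring, hsuc, hsuc, neg_neg]
      rw [hs, ← mul_assoc, hsq, one_mul]
  -- pointwise identity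
  have hpt : ∀ j : ℤ, (((F j : ℂ) * (-1 / z) + (F (j - 1) : ℂ)) ^ (2 * k))⁻¹ =
      z ^ (2 * k) * (((F (1 - j) : ℂ) * z + (F (1 - j - 1) : ℂ)) ^ (2 * k))⁻¹ := by
    intro j
    have e1 : (F j : ℂ) * (-1 / z) + (F (j - 1) : ℂ) =
        ((F (j - 1) : ℂ) * z - (F j : ℂ)) / z := by
      field_simp
      ring
    have e2 : (F (1 - j) : ℂ) * z + (F (1 - j - 1) : ℂ) =
        ((j.negOnePow : ℤ) : ℂ) * ((F (j - 1) : ℂ) * z - (F j : ℂ)) := by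
      have k1 : F (1 - j) = (j.negOnePow : ℤ) * F (j - 1) := by
        have := key (j - 1)
        rw [show -(j-1) = 1 - j by ring, show j - 1 + 1 = j by ring] at this
        exact this
      have k2 : F (1 - j - 1) = -((j.negOnePow : ℤ) * F j) := by
        have := key j
        rw [show 1 - j - 1 = -j by ring, this, hsuc]
        ring
      rw [k1, k2]
      push_cast
      ring
    rw [e1, e2, div_pow, mul_pow, inv_div]
    have hsign : (((j.negOnePow : ℤ) : ℂ)) ^ (2 * k) = 1 := by
      rcases Int.isUnit_iff.mp (Units.isUnit j.negOnePow) with h | h <;>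
        rw [h] <;> push_cast <;> simp [pow_mul]
    rw [hsign, one_mul, div_eq_mul_inv]
  calc ∑' j : ℤ, (((F j : ℂ) * (-1 / z) + (F (j - 1) : ℂ)) ^ (2 * k))⁻¹
      = ∑' j : ℤ, z ^ (2 * k) *
          (((F (1 - j) : ℂ) * z + (F (1 - j - 1) : ℂ)) ^ (2 * k))⁻¹ := by
        exact tsum_congr hpt
    _ = z ^ (2 * k) * ∑' j : ℤ,
          (((F (1 - j) : ℂ) * z + (F (1 - j - 1) : ℂ)) ^ (2 * k))⁻¹ := tsum_mul_left
    _ = z ^ (2 * k) * ∑' j : ℤ, (((F j : ℂ) * z + (F (j - 1) : ℂ)) ^ (2 * k))⁻¹ := by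
        congr 1
        exact (Equiv.subLeft (1 : ℤ)).tsum_eq
          (fun j => (((F j : ℂ) * z + (F (j - 1) : ℂ)) ^ (2 * k))⁻¹)
end

section
/- Let k ≥ 1 and let z be a complex number in the common domain of definition (z ≠ F_n/F_{n-1} for all integers n, z ≠ φ, -1/φ, and likewise 1-z avoids these values). Then the bilateral Fibonacci Eisenstein series satisfies 𝓕_{2k}(1-z) = 𝓕_{2k}(z). -/
/-! Reflecting the summation index `j ↦ -j` maps the series at `z` onto the series at `1 - z`
term by term: the negation formula `F (-n) = (-1)^(n+1) F n` gives
`F (-j) z + F (-j-1) = (-1)^j (F j (1 - z) + F (j - 1))`, and the sign disappears in the even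
power `2k`. -/

section FibonacciRecurrence

variable {M : Type*} [AddCommGroup M]

theorem eq_zero_of_fib_rec {D : ℤ → M} (hrec : ∀ n, D n = D (n - 1) + D (n - 2))
    (h0 : D 0 = 0) (h1 : D 1 = 0) (n : ℤ) : D n = 0 := by
  suffices ∀ n : ℤ, D n = 0 ∧ D (n + 1) = 0 from (this n).1
  intro n
  induction n using Int.induction_on with
  | zero => simpa using ⟨h0, h1⟩
  | succ i ih =>
    refine ⟨ih.2, ?_⟩
    rw [hrec, show (i : ℤ) + 1 + 1 - 1 = i + 1 by ring, show (i : ℤ) + 1 + 1 - 2 = i by ring,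
      ih.1, ih.2, add_zero]
  | pred i ih =>
    refine ⟨?_, by simpa using ih.1⟩
    have h := hrec (-i + 1)
    rwa [show -(i : ℤ) + 1 - 1 = -i by ring, show -(i : ℤ) + 1 - 2 = -i - 1 by ring, ih.1, ih.2,
      zero_add, eq_comm] at h

theorem eq_of_fib_rec {F G : ℤ → M} (hF : ∀ n, F n = F (n - 1) + F (n - 2))
    (hG : ∀ n, G n = G (n - 1) + G (n - 2)) (h0 : F 0 = G 0) (h1 : F 1 = G 1) : F = G := by
  funext n
  refine sub_eq_zero.mp (eq_zero_of_fib_rec (D := F - G) (fun n ↦ ?_) ?_ ?_ n)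
  · simp only [Pi.sub_apply, hF n, hG n]
    abel
  · simp [h0]
  · simp [h1]

theorem fib_rec_neg {F : ℤ → M} (hrec : ∀ n, F n = F (n - 1) + F (n - 2)) (h0 : F 0 = 0)
    (n : ℤ) : F (-n) = (n + 1).negOnePow • F n := by
  -- `n ↦ (-1)^(n+1) F (-n)` solves the same recurrence with the same values at `0` and `1`.
  set G : ℤ → M := fun n ↦ (n + 1).negOnePow • F (-n) with hG
  have hGrec : ∀ n, G n = G (n - 1) + G (n - 2) := by
    intro n
    have h := hrec (-n + 2)
    rw [show -n + 2 - 1 = -(n - 1) by ring, show -n + 2 - 2 = -n by ring,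
      show -n + 2 = -(n - 2) by ring] at h
    simp only [hG]
    rw [show n - 2 + 1 = n + 1 - 2 by ring, Int.negOnePow_sub, Int.negOnePow_even 2 even_two,
      mul_one, h, sub_add_cancel, Int.negOnePow_succ]
    simp only [Units.neg_smul, smul_add]
    abel
  have h1 : F (-1) = F 1 := by simpa [h0] using (hrec 1).symm
  have hFG : F = G :=
    eq_of_fib_rec hrec hGrec (by simp [hG, h0]) (by simp [hG, h1, Int.negOnePow_even 2 even_two])
  rw [congrFun hFG n, hG]
  simp [smul_smul]

end FibonacciRecurrence

theorem fib_rec_neg_mul_add {R : Type*} [Ring R] {F : ℤ → R}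
    (hrec : ∀ n, F n = F (n - 1) + F (n - 2)) (h0 : F 0 = 0) (j : ℤ) (z : R) :
    F (-j) * z + F (-j - 1) = j.negOnePow • (F j * (1 - z) + F (j - 1)) := by
  have hsucc : F (j + 1) = F j + F (j - 1) := by
    rw [hrec, add_sub_cancel_right, show j + 1 - 2 = j - 1 by ring]
  rw [fib_rec_neg hrec h0 j, show -j - 1 = -(j + 1) by ring, fib_rec_neg hrec h0 (j + 1), hsucc]
  simp only [Int.negOnePow_succ, neg_neg, Units.neg_smul, neg_mul, smul_mul_assoc, smul_add,
    mul_sub, mul_one, smul_sub]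
  abel

theorem Int.units_smul_pow_two_mul {R : Type*} [Ring R] (u : ℤˣ) (x : R) (k : ℕ) :
    (u • x) ^ (2 * k) = x ^ (2 * k) := by
  rw [smul_pow, pow_mul, Int.units_sq, one_pow, one_smul]

theorem fib_eisenstein_reflection_general (F : ℤ → ℤ) (h0 : F 0 = 0)
    (hrec : ∀ n : ℤ, F n = F (n - 1) + F (n - 2))
    (k : ℕ) (z : ℂ) :
    ∑' j : ℤ, (((F j : ℂ) * (1 - z) + (F (j - 1) : ℂ)) ^ (2 * k))⁻¹ =
      ∑' j : ℤ, (((F j : ℂ) * z + (F (j - 1) : ℂ)) ^ (2 * k))⁻¹ := by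
  have hrecC : ∀ n, (F n : ℂ) = F (n - 1) + F (n - 2) := fun n ↦ mod_cast hrec n
  have h0C : (F 0 : ℂ) = 0 := mod_cast h0
  symm
  rw [← (Equiv.neg ℤ).tsum_eq]
  refine tsum_congr fun j ↦ ?_
  rw [Equiv.neg_apply, fib_rec_neg_mul_add hrecC h0C j z, Int.units_smul_pow_two_mul]

/-- For `k ≥ 1` and `z` such that both `z` and `1 - z` avoid all ratios `F_n/F_{n-1}`, `φ`
and `-1/φ`, the bilateral Fibonacci Eisenstein series satisfies `𝓕_{2k}(1-z) = 𝓕_{2k}(z)`. -/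
theorem fib_eisenstein_reflection (F : ℤ → ℤ) (h0 : F 0 = 0) (h1 : F 1 = 1)
    (hrec : ∀ n : ℤ, F n = F (n - 1) + F (n - 2))
    (k : ℕ) (hk : 1 ≤ k) (z : ℂ)
    (hpole : ∀ n : ℤ, z ≠ (F n : ℂ) / (F (n - 1) : ℂ))
    (hphi : z ≠ (((1 + Real.sqrt 5) / 2 : ℝ) : ℂ))
    (hphi' : z ≠ -1 / (((1 + Real.sqrt 5) / 2 : ℝ) : ℂ))
    (hpole' : ∀ n : ℤ, 1 - z ≠ (F n : ℂ) / (F (n - 1) : ℂ))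
    (hphi2 : 1 - z ≠ (((1 + Real.sqrt 5) / 2 : ℝ) : ℂ))
    (hphi2' : 1 - z ≠ -1 / (((1 + Real.sqrt 5) / 2 : ℝ) : ℂ)) :
    ∑' j : ℤ, (((F j : ℂ) * (1 - z) + (F (j - 1) : ℂ)) ^ (2 * k))⁻¹ =
      ∑' j : ℤ, (((F j : ℂ) * z + (F (j - 1) : ℂ)) ^ (2 * k))⁻¹ :=
  fib_eisenstein_reflection_general F h0 hrec k z
end

section
/- Let k ≥ 1 and z a complex number with z ≠ 0 avoiding all poles. Then the non-positively indexed part 𝓕_{2k}^-(-z) := Σ_{n≤0} (F_n(-z) + F_{n-1})^{-2k} equals z^{-2k} 𝓕_{2k}^+(1/z), where 𝓕_{2k}^+(w) = Σ_{n≥1} (F_n w + F_{n-1})^{-2k}; that is, under z ↦ -z the negatively indexed terms transform into the positively indexed terms at 1/z. -/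
/-- For `k ≥ 1` and `z ≠ 0` avoiding all poles, the non-positively indexed part satisfies
`𝓕_{2k}^-(-z) = z^{-2k} 𝓕_{2k}^+(1/z)`. -/
theorem fib_eisenstein_minus_swap (F : ℤ → ℤ) (h0 : F 0 = 0) (h1 : F 1 = 1)
    (hrec : ∀ n : ℤ, F n = F (n - 1) + F (n - 2))
    (k : ℕ) (hk : 1 ≤ k) (z : ℂ) (hz0 : z ≠ 0)
    (hpole : ∀ n : ℤ, z ≠ (F n : ℂ) / (F (n - 1) : ℂ))
    (hphi : z ≠ (((1 + Real.sqrt 5) / 2 : ℝ) : ℂ))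
    (hphi' : z ≠ -1 / (((1 + Real.sqrt 5) / 2 : ℝ) : ℂ)) :
    ∑' n : ℕ, (((F (-(n : ℤ)) : ℂ) * (-z) + (F (-(n : ℤ) - 1) : ℂ)) ^ (2 * k))⁻¹ =
      (z ^ (2 * k))⁻¹ *
        ∑' n : ℕ, (((F ((n : ℤ) + 1) : ℂ) * z⁻¹ + (F (n : ℤ) : ℂ)) ^ (2 * k))⁻¹ := by
  have key : ∀ n : ℕ, F (-(n : ℤ)) = (-1) ^ (n + 1) * F (n : ℤ) ∧
      F (-(n : ℤ) - 1) = (-1) ^ n * F ((n : ℤ) + 1) := by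
    intro n
    induction n with
    | zero =>
      constructor
      · simp [h0]
      · have := hrec 1
        simp only [show (1:ℤ) - 1 = 0 by ring, show (1:ℤ) - 2 = -1 by ring, h0, h1] at this
        norm_num [h1]
        omega
    | succ n ih =>
      obtain ⟨ha, hb⟩ := ih
      constructor
      · rw [show (-(((n : ℕ) + 1 : ℕ) : ℤ)) = -(n : ℤ) - 1 by push_cast; ring, hb,
          show ((((n : ℕ) + 1 : ℕ)) : ℤ) = (n : ℤ) + 1 by push_cast; ring, pow_succ, pow_succ]
        ring
      · have h2 := hrec (-(n : ℤ))
        have h3 := hrec ((n : ℤ) + 2)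
        have e1 : -(n : ℤ) - 2 = -(((n : ℕ) + 1 : ℕ) : ℤ) - 1 := by push_cast; ring
        have e2 : ((n : ℤ) + 2) - 1 = (n : ℤ) + 1 := by ring
        have e3 : ((n : ℤ) + 2) - 2 = (n : ℤ) := by ring
        rw [e2, e3] at h3
        rw [e1] at h2
        have : F (-(((n : ℕ) + 1 : ℕ) : ℤ) - 1) = F (-(n : ℤ)) - F (-(n : ℤ) - 1) := by
          omega
        rw [this, ha, hb]
        have e4 : (((n : ℕ) + 1 : ℕ) : ℤ) + 1 = (n : ℤ) + 2 := by push_cast; ring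
        rw [e4, h3, pow_succ]
        ring
  rw [← tsum_mul_left]
  apply tsum_congr
  intro n
  obtain ⟨ha, hb⟩ := key n
  rw [ha, hb]
  push_cast
  have hsign : ((-1 : ℂ) ^ n) ^ (2 * k) = 1 := by
    rw [← pow_mul]
    exact Even.neg_one_pow ⟨n * k, by ring⟩
  have hb1 : ((-1 : ℂ) ^ (n + 1) * (F (n : ℤ) : ℂ)) * (-z) + ((-1 : ℂ) ^ n * (F ((n : ℤ) + 1) : ℂ))
      = (-1 : ℂ) ^ n * ((F (n : ℤ) : ℂ) * z + (F ((n : ℤ) + 1) : ℂ)) := by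
    rw [pow_succ]; ring
  rw [hb1, mul_pow, hsign, one_mul, ← mul_inv, ← mul_pow]
  congr 2
  field_simp
  ring
end

section
/- Let k ≥ 1 and let z be a complex number with z ≠ 0, z ≠ L_n/L_{n-1} for all integers n, and z ≠ φ, -1/φ. Then the bilateral Lucas Eisenstein series 𝓛_{2k}(z) := Σ_{j∈ℤ} (L_j z + L_{j-1})^{-2k} satisfies 𝓛_{2k}(-1/z) = z^{2k} 𝓛_{2k}(z). -/
/-!
The sequence `n ↦ (-1)^n L_{-n}` satisfies the Fibonacci recurrence with the same initial values
as `L`, so `L_{-n} = (-1)^n L_n`. Hence the linear form `L_j (-1/z) + L_{j-1}` equals, up to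
the factor `±z⁻¹`, the linear form `L_{1-j} z + L_{-j}` of the term with index `1 - j`. An even
power kills the sign, so the inversion `z ↦ -1/z` acts on the bilateral series as the reindexing
`j ↦ 1 - j`, which leaves the sum unchanged whether or not the series converges.
-/

def IsFibonacciLike {G : Type*} [AddCommGroup G] (f : ℤ → G) : Prop :=
  ∀ n, f n = f (n - 1) + f (n - 2)

namespace IsFibonacciLike

variable {G : Type*} [AddCommGroup G] {f g : ℤ → G}

theorem sub (hf : IsFibonacciLike f) (hg : IsFibonacciLike g) : IsFibonacciLike (f - g) := by
  intro n
  simp only [Pi.sub_apply, hf n, hg n]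
  abel

theorem eq_zero (hf : IsFibonacciLike f) (h0 : f 0 = 0) (h1 : f 1 = 0) : f = 0 := by
  have forward : ∀ n : ℕ, f n = 0 ∧ f (n + 1) = 0 := by
    intro n
    induction n with
    | zero => exact ⟨h0, by simpa using h1⟩
    | succ n ih =>
      refine ⟨by exact_mod_cast ih.2, ?_⟩
      rw [hf]
      push_cast
      simp only [add_sub_cancel_right, show (n : ℤ) + 1 + 1 - 2 = n by ring, ih.1, ih.2,
        add_zero]
  have backward : ∀ n : ℕ, f (-n) = 0 ∧ f (1 - n) = 0 := by
    intro n
    induction n with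
    | zero => exact ⟨by simpa using h0, by simpa using h1⟩
    | succ n ih =>
      have h := hf (1 - n)
      rw [show (1 - n : ℤ) - 1 = -n by ring, show (1 - n : ℤ) - 2 = -(n + 1 : ℕ) by push_cast; ring,
        ih.1, ih.2, zero_add] at h
      refine ⟨h.symm, ?_⟩
      rw [show (1 - (n + 1 : ℕ) : ℤ) = -n by push_cast; ring]
      exact ih.1
  funext n
  obtain ⟨n, rfl | rfl⟩ := n.eq_nat_or_neg
  · exact (forward n).1
  · exact (backward n).1

theorem ext (hf : IsFibonacciLike f) (hg : IsFibonacciLike g) (h0 : f 0 = g 0)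
    (h1 : f 1 = g 1) : f = g :=
  sub_eq_zero.1 <| (hf.sub hg).eq_zero (sub_eq_zero.2 h0) (sub_eq_zero.2 h1)

theorem negOnePow_smul_neg (hf : IsFibonacciLike f) :
    IsFibonacciLike fun n => n.negOnePow • f (-n) := by
  intro n
  obtain ⟨m, rfl⟩ : ∃ m, n = m + 2 := ⟨n - 2, by ring⟩
  show (m + 2).negOnePow • f (-(m + 2)) =
    (m + 2 - 1).negOnePow • f (-(m + 2 - 1)) + (m + 2 - 2).negOnePow • f (-(m + 2 - 2))
  rw [show m + 2 - 1 = m + 1 by ring, show m + 2 - 2 = m by ring, show m + 2 = m + 1 + 1 by ring,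
    Int.negOnePow_succ, Int.negOnePow_succ, hf (-m), show -(m + 1 + 1) = -m - 2 by ring,
    show -(m + 1) = -m - 1 by ring]
  simp only [neg_neg, Units.neg_smul, smul_add]
  abel

end IsFibonacciLike

theorem lucas_neg {L : ℤ → ℤ} (hL : IsFibonacciLike L) (h0 : L 0 = 2) (h1 : L 1 = 1) (n : ℤ) :
    L (-n) = n.negOnePow * L n := by
  have hm1 : L (-1) = -1 := by
    have := hL 1
    norm_num [h0, h1] at this
    omega
  have h := congrFun (hL.negOnePow_smul_neg.ext hL (by simp) (by simp [hm1, h1])) (-n)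
  simpa [Int.negOnePow_neg, Units.smul_def] using h.symm

theorem lucas_inversion_term {L : ℤ → ℤ} (hL : IsFibonacciLike L) (h0 : L 0 = 2) (h1 : L 1 = 1)
    {z : ℂ} (hz : z ≠ 0) (k : ℕ) (j : ℤ) :
    (((L j : ℂ) * (-1 / z) + L (j - 1)) ^ (2 * k))⁻¹ =
      z ^ (2 * k) * (((L (1 - j) : ℂ) * z + L (1 - j - 1)) ^ (2 * k))⁻¹ := by
  have reflect : ((L (1 - j) : ℂ) * z + L (1 - j - 1)) =
      -(j.negOnePow : ℂ) * (z * ((L j : ℂ) * (-1 / z) + L (j - 1))) := by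
    obtain ⟨i, rfl⟩ : ∃ i, j = i + 1 := ⟨j - 1, by ring⟩
    rw [show 1 - (i + 1) = -i by ring, show -i - 1 = -(i + 1) by ring, add_sub_cancel_right,
      lucas_neg hL h0 h1, lucas_neg hL h0 h1, Int.negOnePow_succ]
    field_simp
    push_cast
    ring
  have sign_pow : (-((j.negOnePow : ℤ) : ℂ)) ^ (2 * k) = 1 := by
    rw [pow_mul, neg_sq, ← Int.cast_pow, ← Units.val_pow_eq_pow_val, Int.units_sq]
    simp
  rw [reflect, mul_pow, sign_pow, one_mul, mul_pow, mul_inv, ← mul_assoc,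
    mul_inv_cancel₀ (pow_ne_zero _ hz), one_mul]

theorem lucas_eisenstein_inversion_general (L : ℤ → ℤ) (h0 : L 0 = 2) (h1 : L 1 = 1)
    (hrec : ∀ n : ℤ, L n = L (n - 1) + L (n - 2))
    (k : ℕ) (z : ℂ) (hz0 : z ≠ 0) :
    ∑' j : ℤ, (((L j : ℂ) * (-1 / z) + (L (j - 1) : ℂ)) ^ (2 * k))⁻¹ =
      z ^ (2 * k) * ∑' j : ℤ, (((L j : ℂ) * z + (L (j - 1) : ℂ)) ^ (2 * k))⁻¹ := by
  rw [tsum_congr (lucas_inversion_term hrec h0 h1 hz0 k), tsum_mul_left]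
  congr 1
  exact (Equiv.subLeft (1 : ℤ)).tsum_eq fun j => (((L j : ℂ) * z + (L (j - 1) : ℂ)) ^ (2 * k))⁻¹

/-- For `k ≥ 1` and `z` avoiding `0`, all ratios `L_n/L_{n-1}`, `φ` and `-1/φ`, the bilateral
Lucas Eisenstein series satisfies `𝓛_{2k}(-1/z) = z^{2k} 𝓛_{2k}(z)`. -/
theorem lucas_eisenstein_inversion (L : ℤ → ℤ) (h0 : L 0 = 2) (h1 : L 1 = 1)
    (hrec : ∀ n : ℤ, L n = L (n - 1) + L (n - 2))
    (k : ℕ) (hk : 1 ≤ k) (z : ℂ) (hz0 : z ≠ 0)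
    (hpole : ∀ n : ℤ, z ≠ (L n : ℂ) / (L (n - 1) : ℂ))
    (hphi : z ≠ (((1 + Real.sqrt 5) / 2 : ℝ) : ℂ))
    (hphi' : z ≠ -1 / (((1 + Real.sqrt 5) / 2 : ℝ) : ℂ)) :
    ∑' j : ℤ, (((L j : ℂ) * (-1 / z) + (L (j - 1) : ℂ)) ^ (2 * k))⁻¹ =
      z ^ (2 * k) * ∑' j : ℤ, (((L j : ℂ) * z + (L (j - 1) : ℂ)) ^ (2 * k))⁻¹ :=
  lucas_eisenstein_inversion_general L h0 h1 hrec k z hz0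
end

section
/- Let k ≥ 1 and z a complex number in the common domain. Then the bilateral Lucas Eisenstein series satisfies 𝓛_{2k}(1-z) = 𝓛_{2k}(z). -/
/-!
The reflection is termwise. A solution of `L n = L (n - 1) + L (n - 2)` with `L 0 = 2 L 1`
satisfies `L (-n) = (-1)^n L n`, since `n ↦ (-1)^n L (-n)` solves the same recurrence with the
same initial values. Hence `L (-j) z + L (-j - 1) = ±(L j (1 - z) + L (j - 1))`, and the even
power `2k` removes the sign, so reindexing the series by `j ↦ -j` gives the identity.
-/

theorem fib_rec_ext {M : Type*} [AddCommGroup M] {f g : ℤ → M}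
    (hf : ∀ n, f n = f (n - 1) + f (n - 2)) (hg : ∀ n, g n = g (n - 1) + g (n - 2))
    (h0 : f 0 = g 0) (h1 : f 1 = g 1) : f = g := by
  suffices h : ∀ n, f n = g n ∧ f (n + 1) = g (n + 1) from funext fun n => (h n).1
  intro n
  induction n using Int.induction_on with
  | zero => exact ⟨h0, h1⟩
  | succ n ih =>
    refine ⟨ih.2, ?_⟩
    have hf' := hf (n + 1 + 1)
    have hg' := hg (n + 1 + 1)
    simp only [add_sub_cancel_right, show (n : ℤ) + 1 + 1 - 2 = n by ring] at hf' hg'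
    rw [hf', hg', ih.1, ih.2]
  | pred n ih =>
    refine ⟨?_, by simpa using ih.1⟩
    have hf' := hf (-n + 1)
    have hg' := hg (-n + 1)
    simp only [add_sub_cancel_right, show -(n : ℤ) + 1 - 2 = -n - 1 by ring] at hf' hg'
    rw [eq_sub_of_add_eq' hf'.symm, eq_sub_of_add_eq' hg'.symm, ih.1, ih.2]

section Field

variable {K : Type*} [Field K] {L : ℤ → K}

theorem fib_rec_neg_s13 (hrec : ∀ n, L n = L (n - 1) + L (n - 2)) (h0 : L 0 = 2 * L 1) (n : ℤ) :
    L (-n) = (-1) ^ n * L n := by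
  have hreflect : (fun m => (-1) ^ m * L (-m)) = L := by
    refine fib_rec_ext (fun m => ?_) hrec (by simp) ?_
    · have hs1 : (-1 : K) ^ (m - 1) = -(-1) ^ m := by
        rw [zpow_sub_one₀ (by norm_num), inv_neg_one, mul_neg_one]
      have hs2 : (-1 : K) ^ (m - 2) = (-1) ^ m := by
        rw [show m - 2 = m - 1 - 1 by ring, zpow_sub_one₀ (by norm_num), hs1]
        simp
      have h := hrec (2 - m)
      rw [show 2 - m - 1 = -(m - 1) by ring, show 2 - m - 2 = -m by ring,
        show 2 - m = -(m - 2) by ring] at h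
      rw [hs1, hs2]
      linear_combination -(-1) ^ m * h
    · have h := hrec 1
      norm_num at h ⊢
      linear_combination h + h0
  calc L (-n) = (-1) ^ (-n) * L (-(-n)) := congrFun hreflect.symm (-n)
    _ = (-1) ^ n * L n := by rw [zpow_neg, ← inv_zpow, inv_neg_one, neg_neg]

theorem fib_rec_reflection_sq (hrec : ∀ n, L n = L (n - 1) + L (n - 2)) (h0 : L 0 = 2 * L 1)
    (z : K) (j : ℤ) :
    (L (-j) * z + L (-j - 1)) ^ 2 = (L j * (1 - z) + L (j - 1)) ^ 2 := by
  have hnext := hrec (j + 1)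
  simp only [add_sub_cancel_right, show j + 1 - 2 = j - 1 by ring] at hnext
  have hsq : ((-1 : K) ^ j) ^ 2 = 1 := by
    rw [← zpow_natCast, ← zpow_mul, Even.neg_one_zpow ⟨j, by ring⟩]
  rw [fib_rec_neg_s13 hrec h0, show -j - 1 = -(j + 1) by ring, fib_rec_neg_s13 hrec h0,
    zpow_add_one₀ (by norm_num), hnext]
  linear_combination (L j * (1 - z) + L (j - 1)) ^ 2 * hsq

end Field

theorem lucas_eisenstein_reflection_general (L : ℤ → ℤ) (h0 : L 0 = 2) (h1 : L 1 = 1)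
    (hrec : ∀ n : ℤ, L n = L (n - 1) + L (n - 2))
    (k : ℕ) (z : ℂ) :
    ∑' j : ℤ, (((L j : ℂ) * (1 - z) + (L (j - 1) : ℂ)) ^ (2 * k))⁻¹ =
      ∑' j : ℤ, (((L j : ℂ) * z + (L (j - 1) : ℂ)) ^ (2 * k))⁻¹ := by
  have hrecℂ : ∀ n, (L n : ℂ) = L (n - 1) + L (n - 2) := fun n => by exact_mod_cast hrec n
  have h0ℂ : (L 0 : ℂ) = 2 * L 1 := by simp [h0, h1]
  symm
  rw [← (Equiv.neg ℤ).tsum_eq]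
  refine tsum_congr fun j => ?_
  rw [Equiv.neg_apply, pow_mul, pow_mul, fib_rec_reflection_sq hrecℂ h0ℂ z j]

/-- For `k ≥ 1` and `z` with both `z` and `1 - z` avoiding all ratios `L_n/L_{n-1}`, `φ` and
`-1/φ`, the bilateral Lucas Eisenstein series satisfies `𝓛_{2k}(1-z) = 𝓛_{2k}(z)`. -/
theorem lucas_eisenstein_reflection (L : ℤ → ℤ) (h0 : L 0 = 2) (h1 : L 1 = 1)
    (hrec : ∀ n : ℤ, L n = L (n - 1) + L (n - 2))
    (k : ℕ) (hk : 1 ≤ k) (z : ℂ)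
    (hpole : ∀ n : ℤ, z ≠ (L n : ℂ) / (L (n - 1) : ℂ))
    (hphi : z ≠ (((1 + Real.sqrt 5) / 2 : ℝ) : ℂ))
    (hphi' : z ≠ -1 / (((1 + Real.sqrt 5) / 2 : ℝ) : ℂ))
    (hpole' : ∀ n : ℤ, 1 - z ≠ (L n : ℂ) / (L (n - 1) : ℂ))
    (hphi2 : 1 - z ≠ (((1 + Real.sqrt 5) / 2 : ℝ) : ℂ))
    (hphi2' : 1 - z ≠ -1 / (((1 + Real.sqrt 5) / 2 : ℝ) : ℂ)) :
    ∑' j : ℤ, (((L j : ℂ) * (1 - z) + (L (j - 1) : ℂ)) ^ (2 * k))⁻¹ =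
      ∑' j : ℤ, (((L j : ℂ) * z + (L (j - 1) : ℂ)) ^ (2 * k))⁻¹ :=
  lucas_eisenstein_reflection_general L h0 h1 hrec k z
end

section
/- Let a be a nonzero integer, k ≥ 1, and let L_n = L_n(a,-1) be the a-Fibonacci sequence extended to all integers. For every complex z with z ≠ 0, z ≠ L_n/L_{n-1} for all integers n (with L_{n-1} ≠ 0), and z avoiding the two limit points of these ratios, the series 𝓛_{a,-1,2k}(z) := Σ_{j∈ℤ} (L_j z + L_{j-1})^{-2k} satisfies 𝓛_{a,-1,2k}(z + a) = z^{-2k} 𝓛_{a,-1,2k}(1/z). -/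
open Filter

/-- For nonzero `a`, `k ≥ 1`, the `a`-Fibonacci bilateral Eisenstein series satisfies
`𝓛_{a,-1,2k}(z + a) = z^{-2k} 𝓛_{a,-1,2k}(1/z)` for `z ≠ 0` avoiding all ratios
`L_n/L_{n-1}` and the two limit points of these ratios. -/
theorem aFib_eisenstein_shift (a : ℤ) (ha : a ≠ 0) (L : ℤ → ℤ) (h0 : L 0 = 0) (h1 : L 1 = 1)
    (hrec : ∀ n : ℤ, L n = a * L (n - 1) + L (n - 2))
    (k : ℕ) (hk : 1 ≤ k) (z : ℂ) (hz0 : z ≠ 0)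
    (hpole : ∀ n : ℤ, L (n - 1) ≠ 0 → z ≠ (L n : ℂ) / (L (n - 1) : ℂ))
    (hlim : ∀ w : ℂ,
      Tendsto (fun n : ℕ => (L (n : ℤ) : ℂ) / (L ((n : ℤ) - 1) : ℂ)) atTop (nhds w) → z ≠ w)
    (hlim' : ∀ w : ℂ,
      Tendsto (fun n : ℕ => (L (-(n : ℤ)) : ℂ) / (L (-(n : ℤ) - 1) : ℂ)) atTop (nhds w) →
        z ≠ w) :
    ∑' j : ℤ, (((L j : ℂ) * (z + (a : ℂ)) + (L (j - 1) : ℂ)) ^ (2 * k))⁻¹ =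
      (z ^ (2 * k))⁻¹ * ∑' j : ℤ, (((L j : ℂ) * z⁻¹ + (L (j - 1) : ℂ)) ^ (2 * k))⁻¹ := by
  set f : ℤ → ℂ := fun j => (((L j : ℂ) * z⁻¹ + (L (j - 1) : ℂ)) ^ (2 * k))⁻¹ with hf
  have key : ∀ j : ℤ, (((L j : ℂ) * (z + (a : ℂ)) + (L (j - 1) : ℂ)) ^ (2 * k))⁻¹
      = (z ^ (2 * k))⁻¹ * f (j + 1) := by
    intro j
    have h := hrec (j + 1)
    have e1 : j + 1 - 1 = j := by ring
    have e2 : j + 1 - 2 = j - 1 := by ring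
    rw [e1, e2] at h
    have h1 : ((L (j + 1) : ℤ) : ℂ) = (a : ℂ) * (L j : ℂ) + (L (j - 1) : ℂ) := by
      exact_mod_cast congrArg (fun t : ℤ => (t : ℂ)) h
    have hb : (L j : ℂ) * (z + a) + (L (j - 1) : ℂ) = (L (j + 1) : ℂ) + (L j : ℂ) * z := by
      rw [h1]; ring
    have hc : (L (j + 1) : ℂ) * z⁻¹ + (L j : ℂ)
        = ((L (j + 1) : ℂ) + (L j : ℂ) * z) * z⁻¹ := by
      field_simp
    simp only [hf, e1]
    rw [hb, hc, mul_pow, mul_inv, inv_pow, inv_inv, ← mul_assoc,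
      mul_comm ((z ^ (2 * k))⁻¹), mul_assoc, inv_mul_cancel₀ (pow_ne_zero _ hz0), mul_one]
  calc ∑' j : ℤ, (((L j : ℂ) * (z + (a : ℂ)) + (L (j - 1) : ℂ)) ^ (2 * k))⁻¹
      = ∑' j : ℤ, (z ^ (2 * k))⁻¹ * f (j + 1) := tsum_congr key
    _ = (z ^ (2 * k))⁻¹ * ∑' j : ℤ, f (j + 1) := tsum_mul_left
    _ = (z ^ (2 * k))⁻¹ * ∑' j : ℤ, f j := by
        congr 1
        exact (Equiv.addRight (1 : ℤ)).tsum_eq f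
end

section
/- Let a be a nonzero integer, k ≥ 1, and let L_n = L_n(a,-1) be the a-Fibonacci sequence extended to all integers. For complex z in the common domain (z ≠ 0, both z and a - z avoiding all ratios L_n/L_{n-1} and their limit points), the series 𝓛_{a,-1,2k}(z) := Σ_{j∈ℤ} (L_j z + L_{j-1})^{-2k} satisfies 𝓛_{a,-1,2k}(a - z) = 𝓛_{a,-1,2k}(z). -/
open Filter

/-- For nonzero `a`, `k ≥ 1`, the `a`-Fibonacci bilateral Eisenstein series satisfies
`𝓛_{a,-1,2k}(a - z) = 𝓛_{a,-1,2k}(z)` for `z ≠ 0` with both `z` and `a - z` avoiding all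
ratios `L_n/L_{n-1}` and the two limit points of these ratios. -/
theorem aFib_eisenstein_reflection (a : ℤ) (ha : a ≠ 0) (L : ℤ → ℤ)
    (h0 : L 0 = 0) (h1 : L 1 = 1)
    (hrec : ∀ n : ℤ, L n = a * L (n - 1) + L (n - 2))
    (k : ℕ) (hk : 1 ≤ k) (z : ℂ) (hz0 : z ≠ 0)
    (hpole : ∀ n : ℤ, L (n - 1) ≠ 0 → z ≠ (L n : ℂ) / (L (n - 1) : ℂ))
    (hpole' : ∀ n : ℤ, L (n - 1) ≠ 0 → (a : ℂ) - z ≠ (L n : ℂ) / (L (n - 1) : ℂ))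
    (hlim : ∀ w : ℂ,
      Tendsto (fun n : ℕ => (L (n : ℤ) : ℂ) / (L ((n : ℤ) - 1) : ℂ)) atTop (nhds w) →
        z ≠ w ∧ (a : ℂ) - z ≠ w)
    (hlim' : ∀ w : ℂ,
      Tendsto (fun n : ℕ => (L (-(n : ℤ)) : ℂ) / (L (-(n : ℤ) - 1) : ℂ)) atTop (nhds w) →
        z ≠ w ∧ (a : ℂ) - z ≠ w) :
    ∑' j : ℤ, (((L j : ℂ) * ((a : ℂ) - z) + (L (j - 1) : ℂ)) ^ (2 * k))⁻¹ =
      ∑' j : ℤ, (((L j : ℂ) * z + (L (j - 1) : ℂ)) ^ (2 * k))⁻¹ := by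
  -- `L_{-n} = (-1)^{n+1} L_n`, proved by a paired induction on `n : ℕ`.
  have hnat : ∀ n : ℕ, L (-(n : ℤ)) = (-1 : ℤ) ^ (n + 1) * L (n : ℤ) ∧
      L (-(n : ℤ) - 1) = (-1 : ℤ) ^ (n + 2) * L ((n : ℤ) + 1) := by
    intro n
    induction n with
    | zero =>
      have hm1 : L (-1) = 1 := by
        have := hrec 1
        norm_num [h0, h1] at this
        omega
      constructor
      · simpa [h0]
      · simpa [hm1, h1] using (by norm_num : ((-1 : ℤ)) ^ 2 = 1)
    | succ n ih =>
      obtain ⟨ih1, ih2⟩ := ih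
      have key : L (-(n : ℤ) - 2) = L (-(n : ℤ)) - a * L (-(n : ℤ) - 1) := by
        have := hrec (-(n : ℤ))
        have e1 : (-(n : ℤ) - 1) = (-(n : ℤ)) - 1 := by ring
        have e2 : (-(n : ℤ) - 2) = (-(n : ℤ)) - 2 := by ring
        rw [← e1, ← e2] at this
        linarith [this]
      have hfwd : L ((n : ℤ) + 2) = a * L ((n : ℤ) + 1) + L (n : ℤ) := by
        have := hrec ((n : ℤ) + 2)
        have e1 : ((n : ℤ) + 2 - 1) = (n : ℤ) + 1 := by ring
        have e2 : ((n : ℤ) + 2 - 2) = (n : ℤ) := by ring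
        rw [e1, e2] at this
        linarith [this]
      constructor
      · have : (-(↑(n + 1) : ℤ)) = -(n : ℤ) - 1 := by push_cast; ring
        rw [this, ih2]
        try push_cast
        try ring
      · have e : (-(↑(n + 1) : ℤ) - 1) = -(n : ℤ) - 2 := by push_cast; ring
        rw [e, key, ih1, ih2]
        have e2 : ((↑(n + 1) : ℤ) + 1) = (n : ℤ) + 2 := by push_cast; ring
        rw [e2, hfwd]
        ring_nf
        try rw [pow_succ, pow_succ]
        try ring
  -- termwise identity: the `(-j)`-th term at `z` equals the `j`-th term at `a - z`.
  have key : ∀ j : ℤ, ((L (-j) : ℂ) * z + (L (-j - 1) : ℂ)) ^ (2 * k) =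
      ((L j : ℂ) * ((a : ℂ) - z) + (L (j - 1) : ℂ)) ^ (2 * k) := by
    intro j
    have hpow : ∀ n : ℕ, ((-1 : ℂ) ^ n) ^ (2 * k) = 1 := by
      intro n
      rw [← pow_mul, mul_comm n (2 * k), pow_mul, ← pow_mul]
      simp [pow_mul]
    rcases Int.natAbs_eq j with hj | hj
    · set n := j.natAbs with hn
      obtain ⟨e1, e2⟩ := hnat n
      have hfwd : L ((n : ℤ) + 1) = a * L (n : ℤ) + L ((n : ℤ) - 1) := by
        have := hrec ((n : ℤ) + 1)
        have a1 : ((n : ℤ) + 1 - 1) = (n : ℤ) := by ring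
        have a2 : ((n : ℤ) + 1 - 2) = (n : ℤ) - 1 := by ring
        rw [a1, a2] at this; linarith [this]
      rw [hj]
      have lhs : (L (-(n : ℤ)) : ℂ) * z + (L (-(n : ℤ) - 1) : ℂ) =
          (-1 : ℂ) ^ n * ((L (n : ℤ) : ℂ) * ((a : ℂ) - z) + (L ((n : ℤ) - 1) : ℂ)) := by
        rw [e1, e2, hfwd]
        push_cast
        rw [pow_succ, pow_succ, pow_succ]
        ring
      rw [lhs, mul_pow, hpow, one_mul]
    · set n := j.natAbs with hn
      obtain ⟨e1, e2⟩ := hnat n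
      have hfwd : L ((n : ℤ) + 1) = a * L (n : ℤ) + L ((n : ℤ) - 1) := by
        have := hrec ((n : ℤ) + 1)
        have a1 : ((n : ℤ) + 1 - 1) = (n : ℤ) := by ring
        have a2 : ((n : ℤ) + 1 - 2) = (n : ℤ) - 1 := by ring
        rw [a1, a2] at this; linarith [this]
      rw [hj]
      have neg : (-(-(n : ℤ))) = (n : ℤ) := by ring
      have neg1 : (-(-(n : ℤ)) - 1) = (n : ℤ) - 1 := by ring
      rw [neg]
      have rhs : (L (-(n : ℤ)) : ℂ) * ((a : ℂ) - z) + (L (-(n : ℤ) - 1) : ℂ) =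
          (-1 : ℂ) ^ n * ((L (n : ℤ) : ℂ) * z + (L ((n : ℤ) - 1) : ℂ)) := by
        rw [e1, e2, hfwd]
        push_cast
        rw [pow_succ, pow_succ, pow_succ]
        ring
      rw [rhs, mul_pow, hpow, one_mul]
  -- reindex the left-hand sum by `j ↦ -j`.
  calc ∑' j : ℤ, (((L j : ℂ) * ((a : ℂ) - z) + (L (j - 1) : ℂ)) ^ (2 * k))⁻¹
      = ∑' j : ℤ, (((L (-j) : ℂ) * z + (L (-j - 1) : ℂ)) ^ (2 * k))⁻¹ := by
        exact tsum_congr fun j => by rw [key j]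
    _ = ∑' j : ℤ, (((L j : ℂ) * z + (L (j - 1) : ℂ)) ^ (2 * k))⁻¹ := by
        exact (Equiv.neg ℤ).tsum_eq fun j => (((L j : ℂ) * z + (L (j - 1) : ℂ)) ^ (2 * k))⁻¹
end

section
/- Let k ≥ 1 and let z be a complex number with z ≠ 0 avoiding all poles of the relevant series. Then the variant bilateral series 𝓖_{2k}(z) := Σ_{j∈ℤ} (F_j - F_{j-1} z)^{-2k} satisfies both 𝓖_{2k}(-1/z) = z^{2k} 𝓖_{2k}(z) and 𝓖_{2k}(1-z) = 𝓖_{2k}(z) on its domain. -/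
/-!
Both identities hold term by term after reindexing the bilateral sum. At negative indices
`F (-n) = (-1)^(n+1) F n`, so `F (1 - j) - F (-j) z = ±(F (j - 1) + F j z)`, and the sign disappears
in the even power. Hence the term of index `1 - j` at `z` is `z^{-2k}` times the term of index `j`
at `-1/z`, and the term of index `2 - j` at `z` is the term of index `j` at `1 - z`. Reindexing a
`tsum` along a bijection of `ℤ` and pulling out a constant factor need no convergence hypothesis.
-/

/-- The paper's `𝓖_{2k}(z)`. -/
noncomputable def fibVariantSeries {K : Type*} [Field K] [TopologicalSpace K] (F : ℤ → ℤ) (k : ℕ)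
    (z : K) : K :=
  ∑' j : ℤ, (((F j : K) - (F (j - 1) : K) * z) ^ (2 * k))⁻¹

theorem eq_of_fib_recurrence {M : Type*} [AddGroup M] {f g : ℤ → M}
    (hf : ∀ n, f n = f (n - 1) + f (n - 2)) (hg : ∀ n, g n = g (n - 1) + g (n - 2))
    (h0 : f 0 = g 0) (h1 : f 1 = g 1) : f = g := by
  have step : ∀ n, f n = g n ∧ f (n + 1) = g (n + 1) := by
    intro n
    induction n using Int.induction_on with
    | zero => exact ⟨h0, by simpa using h1⟩
    | succ n ih =>
      refine ⟨ih.2, ?_⟩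
      have hfn := hf (n + 1 + 1)
      have hgn := hg (n + 1 + 1)
      simp only [add_sub_cancel_right, show (n : ℤ) + 1 + 1 - 2 = n by ring] at hfn hgn
      rw [hfn, hgn, ih.1, ih.2]
    | pred n ih =>
      refine ⟨?_, by simpa using ih.1⟩
      have hfn := hf (-(n : ℤ) + 1)
      have hgn := hg (-(n : ℤ) + 1)
      simp only [add_sub_cancel_right, show -(n : ℤ) + 1 - 2 = -n - 1 by ring] at hfn hgn
      have h := hfn.symm.trans (ih.2.trans hgn)
      rw [ih.1] at h
      exact add_left_cancel h
  exact funext fun n => (step n).1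

section Fibonacci

variable {F : ℤ → ℤ} (h0 : F 0 = 0) (h1 : F 1 = 1) (hrec : ∀ n : ℤ, F n = F (n - 1) + F (n - 2))
include h0 h1 hrec

theorem fib_neg (n : ℤ) : F (-n) = -(n.negOnePow : ℤ) * F n := by
  have hF : F = fun m => -(m.negOnePow : ℤ) * F (-m) := by
    refine eq_of_fib_recurrence hrec (fun m => ?_) (by simp [h0]) ?_
    · have := hrec (-(m - 2))
      rw [show -(m - 2) - 1 = -(m - 1) by ring, show -(m - 2) - 2 = -m by ring] at this
      simp only [Int.negOnePow_sub, Int.negOnePow_one, Int.negOnePow_even 2 even_two]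
      push_cast
      linear_combination (m.negOnePow : ℤ) * this
    · have := hrec 1
      simp only [sub_self, show (1 : ℤ) - 2 = -1 by norm_num, h0, h1] at this
      simp only [Int.negOnePow_one]
      push_cast
      omega
  rw [congrFun hF (-n), neg_neg, Int.negOnePow_neg]

theorem fib_one_sub (n : ℤ) : F (1 - n) = (n.negOnePow : ℤ) * F (n - 1) := by
  rw [show 1 - n = -(n - 1) by ring, fib_neg h0 h1 hrec, Int.negOnePow_sub, Int.negOnePow_one]
  push_cast
  ring

theorem fib_one_sub_sub_fib_neg_mul_pow_two_mul {R : Type*} [CommRing R] (j : ℤ) (z : R)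
    (k : ℕ) :
    ((F (1 - j) : R) - F (-j) * z) ^ (2 * k) = ((F (j - 1) : R) + F j * z) ^ (2 * k) := by
  set σ : R := ((j.negOnePow : ℤ) : R)
  have hσ : σ ^ 2 = 1 := by
    rw [← Int.cast_pow, ← Units.val_pow_eq_pow_val, Int.units_sq, Units.val_one, Int.cast_one]
  have hsign : (F (1 - j) : R) - F (-j) * z = σ * ((F (j - 1) : R) + F j * z) := by
    rw [fib_one_sub h0 h1 hrec, fib_neg h0 h1 hrec]
    push_cast
    ring
  rw [hsign, mul_pow, pow_mul σ, hσ, one_pow, one_mul]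

variable {K : Type*} [Field K] [TopologicalSpace K] (k : ℕ)

theorem fibVariantSeries_neg_one_div [IsTopologicalRing K] [T2Space K] {z : K} (hz : z ≠ 0) :
    fibVariantSeries F k (-1 / z) = z ^ (2 * k) * fibVariantSeries F k z := by
  unfold fibVariantSeries
  conv_rhs => rw [← (Equiv.subLeft (1 : ℤ)).tsum_eq, ← tsum_mul_left]
  refine tsum_congr fun j => ?_
  rw [Equiv.subLeft_apply, sub_sub_cancel_left,
    fib_one_sub_sub_fib_neg_mul_pow_two_mul h0 h1 hrec j z]
  have hS : (F j : K) - F (j - 1) * (-1 / z) = ((F (j - 1) : K) + F j * z) / z := by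
    field_simp
    ring
  rw [hS, div_pow, inv_div, div_eq_mul_inv]

theorem fibVariantSeries_one_sub (z : K) :
    fibVariantSeries F k (1 - z) = fibVariantSeries F k z := by
  unfold fibVariantSeries
  conv_rhs => rw [← (Equiv.subLeft (2 : ℤ)).tsum_eq]
  refine tsum_congr fun j => ?_
  have hT : (F j : K) - F (j - 1) * (1 - z) = F (j - 1 - 1) + F (j - 1) * z := by
    rw [hrec j, sub_sub, one_add_one_eq_two]
    push_cast
    ring
  rw [hT, ← fib_one_sub_sub_fib_neg_mul_pow_two_mul h0 h1 hrec, Equiv.subLeft_apply]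
  ring_nf

end Fibonacci

theorem fib_variant_semimodular_general (F : ℤ → ℤ) (h0 : F 0 = 0) (h1 : F 1 = 1)
    (hrec : ∀ n : ℤ, F n = F (n - 1) + F (n - 2))
    (k : ℕ) (z : ℂ) (hz0 : z ≠ 0) :
    (∑' j : ℤ, (((F j : ℂ) - (F (j - 1) : ℂ) * (-1 / z)) ^ (2 * k))⁻¹ =
        z ^ (2 * k) * ∑' j : ℤ, (((F j : ℂ) - (F (j - 1) : ℂ) * z) ^ (2 * k))⁻¹) ∧
      ∑' j : ℤ, (((F j : ℂ) - (F (j - 1) : ℂ) * (1 - z)) ^ (2 * k))⁻¹ =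
        ∑' j : ℤ, (((F j : ℂ) - (F (j - 1) : ℂ) * z) ^ (2 * k))⁻¹ :=
  ⟨fibVariantSeries_neg_one_div h0 h1 hrec k hz0, fibVariantSeries_one_sub h0 h1 hrec k z⟩

/-- For `k ≥ 1` and `z ≠ 0` such that `z`, `-1/z` and `1 - z` all avoid the ratios
`F_n/F_{n-1}` (`n ∈ ℤ`), `φ` and `-1/φ`, the variant bilateral series
`𝓖_{2k}(z) = Σ_{j∈ℤ} (F_j - F_{j-1} z)^{-2k}` satisfies both
`𝓖_{2k}(-1/z) = z^{2k} 𝓖_{2k}(z)` and `𝓖_{2k}(1-z) = 𝓖_{2k}(z)`. -/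
theorem fib_variant_semimodular (F : ℤ → ℤ) (h0 : F 0 = 0) (h1 : F 1 = 1)
    (hrec : ∀ n : ℤ, F n = F (n - 1) + F (n - 2))
    (k : ℕ) (hk : 1 ≤ k) (z : ℂ) (hz0 : z ≠ 0)
    (hpole : ∀ n : ℤ, z ≠ (F n : ℂ) / (F (n - 1) : ℂ))
    (hpole' : ∀ n : ℤ, -1 / z ≠ (F n : ℂ) / (F (n - 1) : ℂ))
    (hpole'' : ∀ n : ℤ, 1 - z ≠ (F n : ℂ) / (F (n - 1) : ℂ))
    (hphi : z ≠ (((1 + Real.sqrt 5) / 2 : ℝ) : ℂ) ∧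
      z ≠ -1 / (((1 + Real.sqrt 5) / 2 : ℝ) : ℂ))
    (hphi' : -1 / z ≠ (((1 + Real.sqrt 5) / 2 : ℝ) : ℂ) ∧
      -1 / z ≠ -1 / (((1 + Real.sqrt 5) / 2 : ℝ) : ℂ))
    (hphi'' : 1 - z ≠ (((1 + Real.sqrt 5) / 2 : ℝ) : ℂ) ∧
      1 - z ≠ -1 / (((1 + Real.sqrt 5) / 2 : ℝ) : ℂ)) :
    (∑' j : ℤ, (((F j : ℂ) - (F (j - 1) : ℂ) * (-1 / z)) ^ (2 * k))⁻¹ =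
        z ^ (2 * k) * ∑' j : ℤ, (((F j : ℂ) - (F (j - 1) : ℂ) * z) ^ (2 * k))⁻¹) ∧
      ∑' j : ℤ, (((F j : ℂ) - (F (j - 1) : ℂ) * (1 - z)) ^ (2 * k))⁻¹ =
        ∑' j : ℤ, (((F j : ℂ) - (F (j - 1) : ℂ) * z) ^ (2 * k))⁻¹ :=
  fib_variant_semimodular_general F h0 h1 hrec k z hz0
end
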